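/- Let J be a finite set of integers all ≥ 3, G_J = ⊕_{j∈J} ℤ/2^j, with connection set S_J = ∪_{j∈J} T_j where T_j = {±(2i+1) : 0 ≤ i < 2^{j-3}} ⊆ ℤ/2^j embedded in the j-th summand. If characters a_J = (a_j)_{j∈J} and b_J = (b_j)_{j∈J} of G_J satisfy ∑_{j∈J} ∑_{t∈T_j} ω_j^{a_j t} = ∑_{j∈J} ∑_{t∈T_j} ω_j^{b_j t} (where ω_j = exp(2πi/2^j)), and not all a_j, b_j are even, then for the largest m ∈ J such that a_m or b_m is odd, both a_m and b_m are odd and ∑_{t∈T_m} ω_m^{a_m t} = ∑_{t∈T_m} ω_m^{b_m t}. -/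

import Mathlib

/-!
The terms of the sum with `j < m` are ℚ-combinations of even powers of `ω_m`, and those with
`j > m` (where `a_j`, `b_j` are even) are rational, because an arithmetic progression of step `2`
turns them into geometric sums of a root of unity. For odd `c`, `charSum m c` is a nonzero
combination of odd powers of `ω_m`. Since `ω_m ^ 2 ^ (m - 1) = -1`, every power of `ω_m` is
`±` a basis power of the same parity in `ℚ(ω_m)`, so the ℚ-spans of even and of odd powers
meet only in `0`; comparing the odd parts of the two sides gives the theorem.
-/

open Complex

/-- `ω_j = exp(2πi/2^j)`, a primitive `2^j`-th root of unity. -/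
noncomputable def omega (j : ℕ) : ℂ := Complex.exp (2 * Real.pi * Complex.I / 2 ^ j)

/-- The connection set `T_j = {±(2i+1) mod 2^j : 0 ≤ i < 2^(j-3)}` in `ℤ/2^j`. -/
def Tset (j : ℕ) : Finset (ZMod (2 ^ j)) :=
  (Finset.range (2 ^ (j - 3))).image (fun i => ((2 * i + 1 : ℕ) : ZMod (2 ^ j))) ∪
    (Finset.range (2 ^ (j - 3))).image (fun i => -((2 * i + 1 : ℕ) : ZMod (2 ^ j)))

/-- The character sum `∑_{t ∈ T_j} ω_j^(a·t)` for the character of `ℤ/2^j`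
indexed by `a`. -/
noncomputable def charSum (j : ℕ) (a : ZMod (2 ^ j)) : ℂ :=
  ∑ t ∈ Tset j, omega j ^ ((a * t).val)

lemma IsPrimitiveRoot.pow_two_pow_pred_eq_neg_one {R : Type*} [CommRing R]
    [NoZeroDivisors R] {ζ : R} {m : ℕ} (hζ : IsPrimitiveRoot ζ (2 ^ m)) (hm : 1 ≤ m) : ζ ^ 2 ^ (m - 1) = -1 := by
  have h := hζ.pow_of_dvd (by positivity) (pow_dvd_pow 2 (Nat.sub_le m 1))
  rw [Nat.pow_div (Nat.sub_le m 1) two_pos, Nat.sub_sub_self hm, pow_one] at h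
  exact h.eq_neg_one_of_two_right

section PowSpan

variable {K : Type*} [Field K] [CharZero K]

def evenPowSpan (ζ : K) : Submodule ℚ K := Submodule.span ℚ ((ζ ^ ·) '' {k | Even k})

def oddPowSpan (ζ : K) : Submodule ℚ K := Submodule.span ℚ ((ζ ^ ·) '' {k | Odd k})

lemma pow_mem_evenPowSpan (ζ : K) {k : ℕ} (hk : Even k) : ζ ^ k ∈ evenPowSpan ζ :=
  Submodule.subset_span ⟨k, hk, rfl⟩

lemma pow_mem_oddPowSpan (ζ : K) {k : ℕ} (hk : Odd k) : ζ ^ k ∈ oddPowSpan ζ :=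
  Submodule.subset_span ⟨k, hk, rfl⟩

lemma ratCast_mem_evenPowSpan (ζ : K) (q : ℚ) : (q : K) ∈ evenPowSpan ζ := by
  simpa [Rat.smul_def] using Submodule.smul_mem _ q (pow_mem_evenPowSpan ζ Even.zero)

namespace IsPrimitiveRoot

variable {ζ : K} {m : ℕ}

lemma linearIndependent_pow_two_pow (hζ : IsPrimitiveRoot ζ (2 ^ m)) (hm : 1 ≤ m) :
    LinearIndependent ℚ fun i : Fin (2 ^ (m - 1)) => ζ ^ (i : ℕ) := by
  have hdeg : (minpoly ℚ ζ).natDegree = 2 ^ (m - 1) := by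
    rw [← Polynomial.cyclotomic_eq_minpoly_rat hζ (by positivity),
      Polynomial.natDegree_cyclotomic, Nat.totient_prime_pow Nat.prime_two (by omega)]
    simp
  exact hdeg ▸ linearIndependent_pow ζ

lemma disjoint_evenPowSpan_oddPowSpan (hζ : IsPrimitiveRoot ζ (2 ^ m)) (hm : 2 ≤ m) :
    Disjoint (evenPowSpan ζ) (oddPowSpan ζ) := by
  set N := 2 ^ (m - 1)
  have hN : ζ ^ N = -1 := hζ.pow_two_pow_pred_eq_neg_one (by omega)
  let B : Fin N → K := fun i => ζ ^ (i : ℕ)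
  have hspan : ∀ p : ℕ → Prop, (∀ s, p (s % N) ↔ p s) →
      Submodule.span ℚ ((ζ ^ ·) '' {s | p s}) ≤ Submodule.span ℚ (B '' {i | p i}) := by
    intro p hp
    rw [Submodule.span_le]
    rintro _ ⟨s, hs, rfl⟩
    let i : Fin N := ⟨s % N, Nat.mod_lt _ (by positivity)⟩
    have hmem : B i ∈ Submodule.span ℚ (B '' {i | p i}) :=
      Submodule.subset_span ⟨i, (hp s).2 hs, rfl⟩
    have hreduce : ζ ^ s = (-1) ^ (s / N) * B i := by
      rw [← hN, ← pow_mul, ← pow_add, Nat.div_add_mod]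
    simp only [hreduce]
    rcases neg_one_pow_eq_or K (s / N) with h | h <;> simp [h, hmem]
  have hpar : ∀ s, s % N % 2 = s % 2 := fun s => Nat.mod_mod_of_dvd s (dvd_pow_self 2 (by omega))
  refine Disjoint.mono (hspan Even fun s => by simp [Nat.even_iff, hpar])
    (hspan Odd fun s => by simp [Nat.odd_iff, hpar]) ?_
  refine (hζ.linearIndependent_pow_two_pow (by omega)).disjoint_span_image ?_
  exact Set.disjoint_left.2 fun i hi hi' => Nat.not_even_iff_odd.2 hi' hi

end IsPrimitiveRoot

end PowSpan

lemma ZMod.odd_val_iff {n : ℕ} [NeZero n] (hn : 2 ∣ n) (x : ZMod n) :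
    Odd x.val ↔ ZMod.castHom hn (ZMod 2) x = 1 := by
  rw [ZMod.castHom_apply, ZMod.cast_eq_val, ZMod.natCast_eq_one_iff_odd]

lemma ZMod.odd_val_mul {n : ℕ} [NeZero n] (hn : 2 ∣ n) {x y : ZMod n} (hx : Odd x.val)
    (hy : Odd y.val) : Odd (x * y).val := by
  rw [ZMod.odd_val_iff hn] at *
  rw [map_mul, hx, hy, one_mul]

lemma omega_isPrimitiveRoot (j : ℕ) : IsPrimitiveRoot (omega j) (2 ^ j) := by
  convert Complex.isPrimitiveRoot_exp (2 ^ j) (by positivity) using 2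
  rw [omega]
  push_cast
  ring

lemma omega_pow_two_pow_sub {j m : ℕ} (hjm : j ≤ m) : omega m ^ 2 ^ (m - j) = omega j := by
  obtain ⟨k, rfl⟩ := Nat.exists_eq_add_of_le hjm
  rw [omega, omega, ← Complex.exp_nat_mul, Nat.add_sub_cancel_left]
  congr 1
  push_cast
  field_simp
  ring

noncomputable def omegaChar (j : ℕ) : AddChar (ZMod (2 ^ j)) ℂ :=
  AddChar.zmodChar (2 ^ j) (omega_isPrimitiveRoot j).pow_eq_one

lemma charSum_eq_sum_omegaChar (j : ℕ) (a : ZMod (2 ^ j)) :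
    charSum j a = ∑ t ∈ Tset j, omegaChar j (a * t) := rfl

lemma omegaChar_ne_zero (j : ℕ) (x : ZMod (2 ^ j)) : omegaChar j x ≠ 0 :=
  left_ne_zero_of_mul_eq_one
    (by rw [← AddChar.map_add_eq_mul, add_neg_cancel, AddChar.map_zero_eq_one])

lemma omegaChar_two_pow_pred_mul {j : ℕ} (hj : 1 ≤ j) (c : ZMod (2 ^ j)) :
    omegaChar j (2 ^ (j - 1) * c) = (-1) ^ c.val := by
  have h : ((2 ^ (j - 1) : ℕ) : ZMod (2 ^ j)) = 2 ^ (j - 1) := by push_cast; rfl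
  conv_lhs => rw [← ZMod.natCast_zmod_val c, mul_comm, ← nsmul_eq_mul, AddChar.map_nsmul_eq_pow,
    ← h, omegaChar, AddChar.zmodChar_apply',
    (omega_isPrimitiveRoot j).pow_two_pow_pred_eq_neg_one hj]

lemma omegaChar_two_mul_pow {j : ℕ} (hj : 3 ≤ j) (c : ZMod (2 ^ j)) :
    omegaChar j (2 * c) ^ 2 ^ (j - 2) = (-1) ^ c.val := by
  rw [← AddChar.map_nsmul_eq_pow, nsmul_eq_mul, ← omegaChar_two_pow_pred_mul (by omega),
    ← mul_assoc]
  congr 2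
  push_cast
  rw [← pow_succ]
  congr 1
  omega

lemma odd_val_of_mem_Tset {j : ℕ} (hj : 0 < j) {t : ZMod (2 ^ j)} (ht : t ∈ Tset j) :
    Odd t.val := by
  rw [ZMod.odd_val_iff (dvd_pow_self 2 hj.ne')]
  simp only [Tset, Finset.mem_union, Finset.mem_image] at ht
  rcases ht with ⟨i, -, rfl⟩ | ⟨i, -, rfl⟩ <;>
    simp only [map_neg, map_natCast, ZMod.natCast_eq_one_iff_odd.2 (odd_two_mul_add_one i)]
  rfl

lemma Tset_eq_image {j : ℕ} (hj : 3 ≤ j) :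
    Tset j = (Finset.range (2 ^ (j - 2))).image
      fun i : ℕ => 2 * (i : ZMod (2 ^ j)) + 1 - 2 ^ (j - 2) := by
  obtain ⟨h, hh⟩ : ∃ h, h = 2 ^ (j - 3) := ⟨_, rfl⟩
  have hpow : 2 ^ (j - 2) = 2 * h := by rw [hh, ← pow_succ']; congr 1; omega
  have hpowZ : (2 : ZMod (2 ^ j)) ^ (j - 2) = 2 * h := by
    exact_mod_cast congrArg (Nat.cast : ℕ → ZMod (2 ^ j)) hpow
  ext x
  simp only [Tset, Finset.mem_union, Finset.mem_image, Finset.mem_range, hpow, hpowZ, ← hh]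
  constructor
  · rintro (⟨i, hi, rfl⟩ | ⟨i, hi, rfl⟩)
    · exact ⟨h + i, by omega, by push_cast; ring⟩
    · obtain ⟨k, hk⟩ := Nat.exists_eq_add_of_lt hi
      refine ⟨k, by omega, ?_⟩
      rw [hk]
      push_cast
      ring
  · rintro ⟨i, hi, rfl⟩
    rcases lt_or_ge i h with hih | hih
    · obtain ⟨k, hk⟩ := Nat.exists_eq_add_of_lt hih
      refine Or.inr ⟨k, by omega, ?_⟩
      rw [hk]
      push_cast
      ring
    · obtain ⟨k, rfl⟩ := Nat.exists_eq_add_of_le hih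
      exact Or.inl ⟨k, by omega, by push_cast; ring⟩

lemma Tset_image_injOn {j : ℕ} (hj : 3 ≤ j) : Set.InjOn
    (fun i : ℕ => 2 * (i : ZMod (2 ^ j)) + 1 - 2 ^ (j - 2)) (Finset.range (2 ^ (j - 2))) := by
  intro i hi i' hi' hii
  simp only [Finset.coe_range, Set.mem_Iio] at hi hi'
  have hle : 2 * 2 ^ (j - 2) ≤ 2 ^ j := by
    rw [← pow_succ']
    exact Nat.pow_le_pow_right two_pos (by omega)
  have := congrArg ZMod.val (show (((2 * i + 1 : ℕ)) : ZMod (2 ^ j)) = ((2 * i' + 1 : ℕ)) by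
    push_cast; simpa using hii)
  rw [ZMod.val_natCast_of_lt (by omega), ZMod.val_natCast_of_lt (by omega)] at this
  omega

lemma charSum_eq_mul_geom_sum {j : ℕ} (hj : 3 ≤ j) (c : ZMod (2 ^ j)) :
    charSum j c = omegaChar j (c * (1 - 2 ^ (j - 2))) *
      ∑ i ∈ Finset.range (2 ^ (j - 2)), omegaChar j (2 * c) ^ i := by
  rw [charSum_eq_sum_omegaChar, Tset_eq_image hj, Finset.sum_image (Tset_image_injOn hj),
    Finset.mul_sum]
  refine Finset.sum_congr rfl fun i _ => ?_
  rw [← AddChar.map_nsmul_eq_pow, ← AddChar.map_add_eq_mul, nsmul_eq_mul]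
  ring_nf

lemma charSum_ne_zero_of_odd {j : ℕ} (hj : 3 ≤ j) {c : ZMod (2 ^ j)} (hc : Odd c.val) :
    charSum j c ≠ 0 := by
  rw [charSum_eq_mul_geom_sum hj]
  refine mul_ne_zero (omegaChar_ne_zero j _) fun hsum => ?_
  have h := geom_sum_mul (omegaChar j (2 * c)) (2 ^ (j - 2))
  rw [hsum, zero_mul, omegaChar_two_mul_pow hj, hc.neg_one_pow] at h
  norm_num at h

lemma exists_rat_charSum_eq_of_even {j : ℕ} (hj : 3 ≤ j) {c : ZMod (2 ^ j)} (hc : Even c.val) :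
    ∃ q : ℚ, charSum j c = q := by
  rw [charSum_eq_mul_geom_sum hj]
  by_cases h1 : omegaChar j (2 * c) = 1
  · have hw : omegaChar j (c * (1 - 2 ^ (j - 2))) ^ 2 = 1 := by
      rw [← AddChar.map_nsmul_eq_pow,
        show 2 • (c * (1 - 2 ^ (j - 2))) = ((1 - 2 ^ (j - 2) : ℤ)) • (2 * c) by
          rw [nsmul_eq_mul, zsmul_eq_mul]; push_cast; ring,
        AddChar.map_zsmul_eq_zpow, h1, one_zpow]
    simp only [h1, one_pow, Finset.sum_const, Finset.card_range, nsmul_eq_mul, mul_one]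
    rcases sq_eq_one_iff.1 hw with hw | hw
    · exact ⟨2 ^ (j - 2), by rw [hw]; push_cast; ring⟩
    · exact ⟨-2 ^ (j - 2), by rw [hw]; push_cast; ring⟩
  · have h := geom_sum_mul (omegaChar j (2 * c)) (2 ^ (j - 2))
    rw [omegaChar_two_mul_pow hj, hc.neg_one_pow, sub_self] at h
    refine ⟨0, ?_⟩
    rw [(mul_eq_zero.1 h).resolve_right (sub_ne_zero.2 h1), mul_zero, Rat.cast_zero]

lemma charSum_mem_evenPowSpan_of_even {j : ℕ} (hj : 3 ≤ j) {c : ZMod (2 ^ j)} (hc : Even c.val)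
    (ζ : ℂ) : charSum j c ∈ evenPowSpan ζ := by
  obtain ⟨q, hq⟩ := exists_rat_charSum_eq_of_even hj hc
  exact hq ▸ ratCast_mem_evenPowSpan ζ q

lemma charSum_mem_evenPowSpan_of_lt {j m : ℕ} (hjm : j < m) (c : ZMod (2 ^ j)) :
    charSum j c ∈ evenPowSpan (omega m) := by
  refine Submodule.sum_mem _ fun t _ => ?_
  rw [← omega_pow_two_pow_sub hjm.le, ← pow_mul]
  exact pow_mem_evenPowSpan _ ((Nat.even_pow.2 ⟨even_two, by omega⟩).mul_right _)

lemma charSum_mem_oddPowSpan {j : ℕ} (hj : 0 < j) {c : ZMod (2 ^ j)} (hc : Odd c.val) :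
    charSum j c ∈ oddPowSpan (omega j) :=
  Submodule.sum_mem _ fun _ ht => pow_mem_oddPowSpan _
    (ZMod.odd_val_mul (dvd_pow_self 2 hj.ne') hc (odd_val_of_mem_Tset hj ht))

lemma sum_erase_charSum_mem_evenPowSpan {J : Finset ℕ} (hJ : ∀ j ∈ J, 3 ≤ j) {m : ℕ}
    (c : (j : ℕ) → ZMod (2 ^ j)) (hc : ∀ j ∈ J, m < j → Even (c j).val) :
    ∑ j ∈ J.erase m, charSum j (c j) ∈ evenPowSpan (omega m) := by
  refine Submodule.sum_mem _ fun j hj => ?_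
  obtain ⟨hjm, hjJ⟩ := Finset.mem_erase.1 hj
  rcases hjm.lt_or_gt with hlt | hgt
  · exact charSum_mem_evenPowSpan_of_lt hlt _
  · exact charSum_mem_evenPowSpan_of_even (hJ j hjJ) (hc j hjJ hgt) _

lemma odd_val_of_charSum_sub_mem_evenPowSpan {m : ℕ} (hm : 3 ≤ m) {x y : ZMod (2 ^ m)}
    (hx : Odd x.val) (hxy : charSum m x - charSum m y ∈ evenPowSpan (omega m)) :
    Odd y.val := by
  by_contra hy
  have hxE : charSum m x ∈ evenPowSpan (omega m) := by
    simpa using add_mem hxy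
      (charSum_mem_evenPowSpan_of_even hm (Nat.not_odd_iff_even.1 hy) (omega m))
  exact charSum_ne_zero_of_odd hm hx <| Submodule.disjoint_def.1
    ((omega_isPrimitiveRoot m).disjoint_evenPowSpan_oddPowSpan (by omega)) _ hxE
    (charSum_mem_oddPowSpan (by omega) hx)

/-- If two characters `a_J`, `b_J` of `G_J = ⊕_{j∈J} ℤ/2^j` give the same value on the
connection set `S_J = ∪_j T_j`, and not all components are even, then for the largest
`m ∈ J` with `a_m` or `b_m` odd, both `a_m` and `b_m` are odd and the `m`-th character
sums agree. -/
theorem stmt_7 (J : Finset ℕ) (hJ : ∀ j ∈ J, 3 ≤ j)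
    (a b : (j : ℕ) → ZMod (2 ^ j))
    (hsum : ∑ j ∈ J, charSum j (a j) = ∑ j ∈ J, charSum j (b j))
    (m : ℕ) (hmJ : m ∈ J)
    (hmodd : Odd (a m).val ∨ Odd (b m).val)
    (hmax : ∀ j ∈ J, (Odd (a j).val ∨ Odd (b j).val) → j ≤ m) :
    Odd (a m).val ∧ Odd (b m).val ∧ charSum m (a m) = charSum m (b m) := by
  have hm : 3 ≤ m := hJ m hmJ
  have heven : ∀ j ∈ J, m < j → Even (a j).val ∧ Even (b j).val := fun j hj hmj => by
    simpa [Nat.not_odd_iff_even] using mt (hmax j hj) (by omega)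
  have hdiff : charSum m (a m) - charSum m (b m) ∈ evenPowSpan (omega m) := by
    rw [← Finset.add_sum_erase J _ hmJ, ← Finset.add_sum_erase J _ hmJ] at hsum
    rw [show charSum m (a m) - charSum m (b m) = ∑ j ∈ J.erase m, charSum j (b j) -
        ∑ j ∈ J.erase m, charSum j (a j) by linear_combination hsum]
    exact sub_mem (sum_erase_charSum_mem_evenPowSpan hJ b fun j hj hmj => (heven j hj hmj).2)
      (sum_erase_charSum_mem_evenPowSpan hJ a fun j hj hmj => (heven j hj hmj).1)
  have hodd : Odd (a m).val ∧ Odd (b m).val := by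
    rcases hmodd with ha | hb
    · exact ⟨ha, odd_val_of_charSum_sub_mem_evenPowSpan hm ha hdiff⟩
    · refine ⟨odd_val_of_charSum_sub_mem_evenPowSpan hm hb ?_, hb⟩
      simpa using neg_mem hdiff
  refine ⟨hodd.1, hodd.2, sub_eq_zero.1 <| Submodule.disjoint_def.1
    ((omega_isPrimitiveRoot m).disjoint_evenPowSpan_oddPowSpan (by omega)) _ hdiff ?_⟩
  exact sub_mem (charSum_mem_oddPowSpan (by omega) hodd.1)
    (charSum_mem_oddPowSpan (by omega) hodd.2)
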